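/- arXiv:1512.07104 — 2 statements merged into one kernel-verified Lean document; each statement's English description precedes it below -/
import Mathlib

section
/- The series Σ_{n≥0} (π_n + 1/(λ_n π_n)) diverges if and only if the dual series Σ_{n≥0} (π_n^d + 1/(λ_n^d π_n^d)) diverges. -/
open Finset

lemma summable_add_iff_aux {a b : ℕ → ℝ} (ha : ∀ n, 0 ≤ a n) (hb : ∀ n, 0 ≤ b n) :
    Summable (fun n => a n + b n) ↔ Summable a ∧ Summable b := by
  constructor
  · intro h
    exact ⟨h.of_nonneg_of_le ha (fun n => le_add_of_nonneg_right (hb n)),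
           h.of_nonneg_of_le hb (fun n => le_add_of_nonneg_left (ha n))⟩
  · rintro ⟨h1, h2⟩; exact h1.add h2

/-- The series `Σ (π_n + 1/(λ_n π_n))` diverges iff the dual series
`Σ (π_n^d + 1/(λ_n^d π_n^d))` diverges, where `λ_n^d = μ_n`,
`π_n = ∏_{i<n} λ_i/μ_{i+1}` and `π_n^d = ∏_{i<n} μ_i/λ_i`. -/
theorem dual_series_divergence
    (lam mu : ℕ → ℝ)
    (hlam : ∀ n, 0 < lam n) (hmu : ∀ n, 0 < mu n)
    (pi pid : ℕ → ℝ)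
    (hpi : ∀ n, pi n = ∏ i ∈ Finset.range n, lam i / mu (i + 1))
    (hpid : ∀ n, pid n = ∏ i ∈ Finset.range n, mu i / lam i) :
    (¬ Summable (fun n => pi n + 1 / (lam n * pi n))) ↔
      (¬ Summable (fun n => pid n + 1 / (mu n * pid n))) := by
  have hpin : ∀ n, 0 < pi n := fun n => by
    rw [hpi]; exact Finset.prod_pos fun i _ => div_pos (hlam i) (hmu (i + 1))
  have hpidn : ∀ n, 0 < pid n := fun n => by
    rw [hpid]; exact Finset.prod_pos fun i _ => div_pos (hmu i) (hlam i)
  have tele : ∀ n, ∏ i ∈ Finset.range n, mu i / mu (i + 1) = mu 0 / mu n := by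
    intro n
    induction n with
    | zero => simp [div_self (hmu 0).ne']
    | succ n ih =>
      rw [Finset.prod_range_succ, ih, div_mul_div_comm, mul_comm (mu 0),
        mul_div_mul_left _ _ (hmu n).ne']
  have key1 : ∀ n, mu n * (pid n * pi n) = mu 0 := by
    intro n
    rw [hpi, hpid, ← Finset.prod_mul_distrib]
    have h : ∀ i ∈ Finset.range n, mu i / lam i * (lam i / mu (i + 1)) = mu i / mu (i + 1) := by
      intro i _
      rw [div_mul_div_comm, mul_comm (mu i), mul_div_mul_left _ _ (hlam i).ne']
    rw [Finset.prod_congr rfl h, tele, mul_comm, div_mul_cancel₀ _ (hmu n).ne']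
  have key2 : ∀ n, lam n * pi n * pid (n + 1) = mu 0 := by
    intro n
    have hstep : pid (n + 1) = pid n * (mu n / lam n) := by
      rw [hpid, Finset.prod_range_succ, ← hpid]
    rw [hstep]
    calc lam n * pi n * (pid n * (mu n / lam n))
        = mu n * (pid n * pi n) * (lam n / lam n) := by ring
      _ = mu 0 := by rw [div_self (hlam n).ne', mul_one, key1]
  have hB : ∀ n, 1 / (lam n * pi n) = (1 / mu 0) * pid (n + 1) := by
    intro n
    rw [eq_comm, div_mul_eq_mul_div, one_mul, div_eq_div_iff (hmu 0).ne'
      (mul_pos (hlam n) (hpin n)).ne']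
    linear_combination key2 n
  have hC : ∀ n, 1 / (mu n * pid n) = (1 / mu 0) * pi n := by
    intro n
    rw [eq_comm, div_mul_eq_mul_div, one_mul, div_eq_div_iff (hmu 0).ne'
      (mul_pos (hmu n) (hpidn n)).ne']
    linear_combination key1 n
  have hfs : Summable (fun n => pi n + 1 / (lam n * pi n)) ↔
      Summable pi ∧ Summable (fun n => 1 / (lam n * pi n)) :=
    summable_add_iff_aux (fun n => (hpin n).le)
      (fun n => le_of_lt (div_pos one_pos (mul_pos (hlam n) (hpin n))))
  have hgs : Summable (fun n => pid n + 1 / (mu n * pid n)) ↔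
      Summable pid ∧ Summable (fun n => 1 / (mu n * pid n)) :=
    summable_add_iff_aux (fun n => (hpidn n).le)
      (fun n => le_of_lt (div_pos one_pos (mul_pos (hmu n) (hpidn n))))
  have e1 : Summable (fun n => 1 / (lam n * pi n)) ↔ Summable pid := by
    have : (fun n => 1 / (lam n * pi n)) = fun n => (1 / mu 0) * pid (n + 1) :=
      funext hB
    rw [this, summable_mul_left_iff (one_div_ne_zero (hmu 0).ne')]
    exact summable_nat_add_iff 1
  have e2 : Summable (fun n => 1 / (mu n * pid n)) ↔ Summable pi := by
    have : (fun n => 1 / (mu n * pid n)) = fun n => (1 / mu 0) * pi n :=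
      funext hC
    rw [this, summable_mul_left_iff (one_div_ne_zero (hmu 0).ne')]
  rw [hfs, hgs, e1, e2, and_comm]
end

section
/- If {a_n}_{n≥1} is a chain sequence with parameter sequences {g_n} and {h_n}, then g_n < h_n for all n ≥ 0 if and only if g_0 < h_0. -/
/-- `g` is a parameter sequence for the chain sequence `a` (where `a (n+1)` plays
the role of `a_{n+1}`, `n ≥ 0`): `0 ≤ g 0 < 1`, `0 < g n < 1` for `n ≥ 1`, and
`a_{n+1} = (1 - g_n) g_{n+1}`. -/
def IsParamSeq (a g : ℕ → ℝ) : Prop :=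
  0 ≤ g 0 ∧ g 0 < 1 ∧ (∀ n : ℕ, 0 < g (n + 1) ∧ g (n + 1) < 1) ∧
    ∀ n : ℕ, a (n + 1) = (1 - g n) * g (n + 1)

/-- For two parameter sequences `g`, `h` of a chain sequence `a`:
`g_n < h_n` for all `n` iff `g_0 < h_0`. -/
theorem paramSeq_lt_iff (a g h : ℕ → ℝ)
    (hg : IsParamSeq a g) (hh : IsParamSeq a h) :
    (∀ n, g n < h n) ↔ g 0 < h 0 := by
  obtain ⟨hg0, hg1, hgn, hga⟩ := hg
  obtain ⟨hh0, hh1, hhn, hha⟩ := hh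
  constructor
  · intro H; exact H 0
  · intro h0
    intro n
    induction n with
    | zero => exact h0
    | succ n ih =>
      have hglt1 : g n < 1 := by cases n with
        | zero => exact hg1
        | succ m => exact (hgn m).2
      have hgpos : (0:ℝ) < 1 - g n := by linarith
      have hhpos : 0 < h (n + 1) := (hhn n).1
      have key : (1 - g n) * g (n + 1) = (1 - h n) * h (n + 1) := by
        rw [← hga n, hha n]
      have : (1 - g n) * g (n + 1) < (1 - g n) * h (n + 1) := by
        rw [key]
        have : (1 - h n) < (1 - g n) := by linarith
        nlinarith
      exact lt_of_mul_lt_mul_left (by linarith) (le_of_lt hgpos)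
end
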